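/- (Large-frequency eigenvalue asymptotics, case ρ+θ = 1) Assume additionally ρ + θ = 1. Then there exist N > 1 and functions μ₁, μ₂, μ₃, μ₄ : (N,∞) → ℂ such that for every r > N the multiset of roots (with multiplicity) of the characteristic polynomial of B(r) is {μ₁(r), μ₂(r), μ₃(r), μ₄(r)}, and as r → ∞: μ₁(r) − b²r^{2−2θ} = O(r^{3−4θ}), μ₂(r) − a²r^{2−2θ} = O(r^{3−4θ}), μ₃(r) − (r^{2θ} + (1−b²)r^{2−2θ}) = O(r^{3−4θ}), and μ₄(r) − (r^{2θ} + (1−a²)r^{2−2θ}) = O(r^{3−4θ}). -/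

import Mathlib

noncomputable section

/-- The matrix `B₀` with rows (1,0,1,0), (0,1,0,1), (1,0,1,0), (0,1,0,1). -/
def B0 : Matrix (Fin 4) (Fin 4) ℂ :=
  !![1,0,1,0; 0,1,0,1; 1,0,1,0; 0,1,0,1]

/-- The matrix `B₁ = diag(−b, −a, b, a)`. -/
def B1 (a b : ℝ) : Matrix (Fin 4) (Fin 4) ℂ :=
  !![-(b:ℂ),0,0,0; 0,-(a:ℂ),0,0; 0,0,(b:ℂ),0; 0,0,0,(a:ℂ)]

/-- The coefficient matrix `B(r) = (1/2)(r^{2ρ}+r^{2θ})B₀ + i r B₁`. -/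
def Bmat (a b ρ θ r : ℝ) : Matrix (Fin 4) (Fin 4) ℂ :=
  (((1/2) * (r ^ (2*ρ) + r ^ (2*θ)) : ℝ) : ℂ) • B0 + (Complex.I * (r : ℂ)) • B1 a b


open Asymptotics Filter Topology
open Polynomial

/-! The matrix `B(r)` splits into two `2 × 2` blocks, on the coordinates `{1, 3}` and `{2, 4}`,
with characteristic polynomials `X² - 2sX + (cr)²` for `c = b, a`, where `s = (u + v)/2`,
`u = r^{2ρ}` and `v = r^{2θ}`. Since `ρ + θ = 1` we have `r² = uv`, so the roots are
`s ± √(s² - c²uv)`, and `s² - c²uv = (s - c²u)² + c²(1 - c²)u²`. Once `v` dominates `u`, this gives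
`√(s² - c²uv) = s - c²u + O(u²/v)`, and `u²/v = r^{4-6θ} ≤ r^{3-4θ}` because `θ ≥ 1/2`. -/

lemma Real.abs_sqrt_sq_add_sub_le {E d : ℝ} (hE : 0 < E) (hd : 0 ≤ E ^ 2 + d) :
    |√(E ^ 2 + d) - E| ≤ |d| / E := by
  have hpos : 0 < √(E ^ 2 + d) + E := by positivity
  have hfactor : √(E ^ 2 + d) - E = d / (√(E ^ 2 + d) + E) := by
    rw [eq_div_iff hpos.ne']
    linear_combination Real.sq_sqrt hd
  rw [hfactor, abs_div, abs_of_pos hpos]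
  exact div_le_div_of_nonneg_left (abs_nonneg _) hE (by linarith [Real.sqrt_nonneg (E ^ 2 + d)])

section MeanEstimates

variable {c u v : ℝ}

lemma quarter_le_mean_sub (hu : 0 ≤ u) (h : 4 * c ^ 2 * u ≤ v) :
    v / 4 ≤ (u + v) / 2 - c ^ 2 * u := by
  linarith

lemma mean_sq_sub_eq (c u v : ℝ) :
    ((u + v) / 2) ^ 2 - c ^ 2 * (u * v)
      = ((u + v) / 2 - c ^ 2 * u) ^ 2 + c ^ 2 * (1 - c ^ 2) * u ^ 2 := by
  ring

lemma mean_sq_sub_nonneg (hu : 0 ≤ u) (h : 4 * c ^ 2 * u ≤ v) :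
    0 ≤ ((u + v) / 2) ^ 2 - c ^ 2 * (u * v) := by
  have hE := quarter_le_mean_sub hu h
  have hcu : 0 ≤ c ^ 2 * u := by positivity
  rw [mean_sq_sub_eq]
  nlinarith

lemma abs_sqrt_mean_sq_sub_le (hu : 0 ≤ u) (hv : 0 < v) (h : 4 * c ^ 2 * u ≤ v) :
    |√(((u + v) / 2) ^ 2 - c ^ 2 * (u * v)) - ((u + v) / 2 - c ^ 2 * u)|
      ≤ 4 * |c ^ 2 * (1 - c ^ 2)| * u ^ 2 / v := by
  have hE := quarter_le_mean_sub hu h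
  calc _ ≤ |c ^ 2 * (1 - c ^ 2) * u ^ 2| / ((u + v) / 2 - c ^ 2 * u) := by
        rw [mean_sq_sub_eq]
        exact Real.abs_sqrt_sq_add_sub_le (by linarith)
          (mean_sq_sub_eq c u v ▸ mean_sq_sub_nonneg hu h)
    _ ≤ |c ^ 2 * (1 - c ^ 2) * u ^ 2| / (v / 4) := by gcongr
    _ = 4 * |c ^ 2 * (1 - c ^ 2)| * u ^ 2 / v := by
        rw [abs_mul, abs_of_nonneg (sq_nonneg u)]
        ring

end MeanEstimates

lemma charpoly_smul_B0_add_smul_B1 (p z : ℂ) (a b : ℝ) :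
    (p • B0 + z • B1 a b).charpoly
      = (X ^ 2 - C (2 * p) * X - C ((z * b) ^ 2)) * (X ^ 2 - C (2 * p) * X - C ((z * a) ^ 2)) := by
  have hblocks : p • B0 + z • B1 a b =
      !![p - z * b, 0, p, 0; 0, p - z * a, 0, p; p, 0, p + z * b, 0; 0, p, 0, p + z * a] := by
    ext i j
    fin_cases i <;> fin_cases j <;> simp [B0, B1] <;> ring
  rw [hblocks, Matrix.charpoly]
  simp [Matrix.det_succ_row_zero, Fin.sum_univ_succ, Matrix.charmatrix_apply, Matrix.diagonal,
    Fin.succAbove, map_ofNat]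
  ring

lemma X_sq_sub_C_mul_X_add_C_eq_mul (s k : ℝ) (hk : k ≤ s ^ 2) :
    (X ^ 2 - C (2 * (s : ℂ)) * X + C (k : ℂ) : ℂ[X])
      = (X - C ((s - √(s ^ 2 - k) : ℝ) : ℂ)) * (X - C ((s + √(s ^ 2 - k) : ℝ) : ℂ)) := by
  have hsum : C ((s - √(s ^ 2 - k) : ℝ) : ℂ) + C ((s + √(s ^ 2 - k) : ℝ) : ℂ)
      = C (2 * (s : ℂ)) := by
    rw [← C_add]
    congr 1
    push_cast
    ring
  have hprod : C ((s - √(s ^ 2 - k) : ℝ) : ℂ) * C ((s + √(s ^ 2 - k) : ℝ) : ℂ) = C (k : ℂ) := by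
    rw [← C_mul, ← Complex.ofReal_mul]
    congr 2
    linear_combination -Real.sq_sqrt (sub_nonneg.2 hk)
  linear_combination X * hsum - hprod

def halfSum (ρ θ r : ℝ) : ℝ := 1 / 2 * (r ^ (2 * ρ) + r ^ (2 * θ))

def lowerEig (c ρ θ r : ℝ) : ℝ := halfSum ρ θ r - √(halfSum ρ θ r ^ 2 - (c * r) ^ 2)

def upperEig (c ρ θ r : ℝ) : ℝ := halfSum ρ θ r + √(halfSum ρ θ r ^ 2 - (c * r) ^ 2)

lemma charpoly_Bmat (a b ρ θ r : ℝ) :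
    (Bmat a b ρ θ r).charpoly
      = (X ^ 2 - C (2 * (halfSum ρ θ r : ℂ)) * X + C (((b * r) ^ 2 : ℝ) : ℂ))
        * (X ^ 2 - C (2 * (halfSum ρ θ r : ℂ)) * X + C (((a * r) ^ 2 : ℝ) : ℂ)) := by
  have hsq (c : ℝ) : (Complex.I * r * c) ^ 2 = -(((c * r) ^ 2 : ℝ) : ℂ) := by
    push_cast; linear_combination (r * c : ℂ) ^ 2 * Complex.I_sq
  rw [Bmat, charpoly_smul_B0_add_smul_B1, hsq, hsq, map_neg, map_neg, sub_neg_eq_add,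
    sub_neg_eq_add]
  rfl

lemma roots_charpoly_Bmat {a b ρ θ r : ℝ} (ha : (a * r) ^ 2 ≤ halfSum ρ θ r ^ 2)
    (hb : (b * r) ^ 2 ≤ halfSum ρ θ r ^ 2) :
    (Bmat a b ρ θ r).charpoly.roots = {(lowerEig b ρ θ r : ℂ), (lowerEig a ρ θ r : ℂ),
      (upperEig b ρ θ r : ℂ), (upperEig a ρ θ r : ℂ)} := by
  rw [charpoly_Bmat, X_sq_sub_C_mul_X_add_C_eq_mul _ _ hb, X_sq_sub_C_mul_X_add_C_eq_mul _ _ ha,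
    ← roots_multiset_prod_X_sub_C {(lowerEig b ρ θ r : ℂ), (lowerEig a ρ θ r : ℂ),
      (upperEig b ρ θ r : ℂ), (upperEig a ρ θ r : ℂ)}]
  simp only [Multiset.insert_eq_cons, Multiset.map_cons, Multiset.map_singleton,
    Multiset.prod_cons, Multiset.prod_singleton, lowerEig, upperEig]
  ring_nf

section Asymptotics

variable {ρ θ : ℝ}

lemma eventually_four_mul_rpow_le (hρθ : ρ < θ) (c : ℝ) :
    ∀ᶠ r in atTop, 4 * c ^ 2 * r ^ (2 * ρ) ≤ r ^ (2 * θ) := by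
  filter_upwards [(tendsto_rpow_atTop (by linarith : 0 < 2 * θ - 2 * ρ)).eventually_ge_atTop
    (4 * c ^ 2), eventually_gt_atTop 0] with r hr hr0
  calc 4 * c ^ 2 * r ^ (2 * ρ) ≤ r ^ (2 * θ - 2 * ρ) * r ^ (2 * ρ) := by gcongr
    _ = r ^ (2 * θ) := by rw [← Real.rpow_add hr0]; congr 1; ring

lemma halfSum_sq_sub_sq (hsum : ρ + θ = 1) (c : ℝ) {r : ℝ} (hr : 0 < r) :
    halfSum ρ θ r ^ 2 - (c * r) ^ 2
      = ((r ^ (2 * ρ) + r ^ (2 * θ)) / 2) ^ 2 - c ^ 2 * (r ^ (2 * ρ) * r ^ (2 * θ)) := by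
  have huv : r ^ (2 * ρ) * r ^ (2 * θ) = r ^ 2 := by
    rw [← Real.rpow_add hr, ← Real.rpow_natCast]
    congr 1
    push_cast
    linarith
  rw [huv, halfSum]
  ring

lemma eventually_sq_le_halfSum_sq (hsum : ρ + θ = 1) (hρθ : ρ < θ) (c : ℝ) :
    ∀ᶠ r in atTop, (c * r) ^ 2 ≤ halfSum ρ θ r ^ 2 := by
  filter_upwards [eventually_four_mul_rpow_le hρθ c, eventually_gt_atTop 0] with r h hr
  rw [← sub_nonneg, halfSum_sq_sub_sq hsum c hr]
  exact mean_sq_sub_nonneg (by positivity) h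

lemma isBigO_sqrt_halfSum_sq_sub_sq (hsum : ρ + θ = 1) (hθ : 1 / 2 < θ) (c : ℝ) :
    (fun r => √(halfSum ρ θ r ^ 2 - (c * r) ^ 2) - (halfSum ρ θ r - c ^ 2 * r ^ (2 * ρ)))
      =O[atTop] fun r => r ^ (3 - 4 * θ) := by
  have hρθ : ρ < θ := by linarith
  refine IsBigO.of_bound (4 * |c ^ 2 * (1 - c ^ 2)|) ?_
  filter_upwards [eventually_four_mul_rpow_le hρθ c, eventually_ge_atTop 1] with r h hr
  have hr0 : 0 < r := by linarith
  have hdecay : (r ^ (2 * ρ)) ^ 2 / r ^ (2 * θ) ≤ r ^ (3 - 4 * θ) := by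
    rw [div_le_iff₀ (by positivity), ← Real.rpow_add hr0, ← Real.rpow_natCast,
      ← Real.rpow_mul hr0.le]
    exact Real.rpow_le_rpow_of_exponent_le hr (by push_cast; linarith)
  have hmean : halfSum ρ θ r = (r ^ (2 * ρ) + r ^ (2 * θ)) / 2 := by rw [halfSum]; ring
  rw [Real.norm_eq_abs, Real.norm_eq_abs, abs_of_pos (Real.rpow_pos_of_pos hr0 _),
    halfSum_sq_sub_sq hsum c hr0, hmean]
  calc _ ≤ 4 * |c ^ 2 * (1 - c ^ 2)| * (r ^ (2 * ρ)) ^ 2 / r ^ (2 * θ) :=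
        abs_sqrt_mean_sq_sub_le (by positivity) (by positivity) h
    _ ≤ 4 * |c ^ 2 * (1 - c ^ 2)| * r ^ (3 - 4 * θ) := by
        rw [mul_div_assoc]
        gcongr

lemma isBigO_lowerEig_sub (hsum : ρ + θ = 1) (hθ : 1 / 2 < θ) (c : ℝ) :
    (fun r => lowerEig c ρ θ r - c ^ 2 * r ^ (2 - 2 * θ)) =O[atTop] fun r => r ^ (3 - 4 * θ) := by
  refine (isBigO_sqrt_halfSum_sq_sub_sq hsum hθ c).neg_left.congr_left fun r => ?_
  rw [lowerEig, show 2 - 2 * θ = 2 * ρ by linarith]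
  ring

lemma isBigO_upperEig_sub (hsum : ρ + θ = 1) (hθ : 1 / 2 < θ) (c : ℝ) :
    (fun r => upperEig c ρ θ r - (r ^ (2 * θ) + (1 - c ^ 2) * r ^ (2 - 2 * θ)))
      =O[atTop] fun r => r ^ (3 - 4 * θ) := by
  refine (isBigO_sqrt_halfSum_sq_sub_sq hsum hθ c).congr_left fun r => ?_
  rw [upperEig, halfSum, show 2 - 2 * θ = 2 * ρ by linarith]
  ring

end Asymptotics

theorem stmt8_general (a b ρ θ : ℝ)
    (hθ : 1/2 < θ)
    (hsum : ρ + θ = 1) :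
    ∃ N : ℝ, 1 < N ∧ ∃ m₁ m₂ m₃ m₄ : ℝ → ℂ,
      (∀ r : ℝ, N < r →
        (Bmat a b ρ θ r).charpoly.roots = {m₁ r, m₂ r, m₃ r, m₄ r}) ∧
      (fun r : ℝ => m₁ r - ((b^2 * r ^ (2 - 2*θ) : ℝ) : ℂ))
        =O[atTop] (fun r : ℝ => r ^ (3 - 4*θ)) ∧
      (fun r : ℝ => m₂ r - ((a^2 * r ^ (2 - 2*θ) : ℝ) : ℂ))
        =O[atTop] (fun r : ℝ => r ^ (3 - 4*θ)) ∧
      (fun r : ℝ => m₃ r - ((r ^ (2*θ) + (1 - b^2) * r ^ (2 - 2*θ) : ℝ) : ℂ))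
        =O[atTop] (fun r : ℝ => r ^ (3 - 4*θ)) ∧
      (fun r : ℝ => m₄ r - ((r ^ (2*θ) + (1 - a^2) * r ^ (2 - 2*θ) : ℝ) : ℂ))
        =O[atTop] (fun r : ℝ => r ^ (3 - 4*θ)) := by
  have hρθ : ρ < θ := by linarith
  obtain ⟨N, hN⟩ := eventually_atTop.1 ((eventually_sq_le_halfSum_sq hsum hρθ a).and
    (eventually_sq_le_halfSum_sq hsum hρθ b))
  refine ⟨max N 2, by simp, fun r => lowerEig b ρ θ r, fun r => lowerEig a ρ θ r,
    fun r => upperEig b ρ θ r, fun r => upperEig a ρ θ r, fun r hr => ?_, ?_, ?_, ?_, ?_⟩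
  · obtain ⟨hNa, hNb⟩ := hN r (max_lt_iff.1 hr).1.le
    exact roots_charpoly_Bmat hNa hNb
  all_goals simp only [← Complex.ofReal_sub, Complex.isBigO_ofReal_left]
  · exact isBigO_lowerEig_sub hsum hθ b
  · exact isBigO_lowerEig_sub hsum hθ a
  · exact isBigO_upperEig_sub hsum hθ b
  · exact isBigO_upperEig_sub hsum hθ a

/-- Large-frequency eigenvalue asymptotics in the case `ρ + θ = 1`. -/
theorem stmt8 (a b ρ θ : ℝ) (ha : 0 < a) (hab : a < b)
    (hρ0 : 0 ≤ ρ) (hρ : ρ < 1/2) (hθ : 1/2 < θ) (hθ1 : θ ≤ 1)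
    (hsum : ρ + θ = 1) :
    ∃ N : ℝ, 1 < N ∧ ∃ m₁ m₂ m₃ m₄ : ℝ → ℂ,
      (∀ r : ℝ, N < r →
        (Bmat a b ρ θ r).charpoly.roots = {m₁ r, m₂ r, m₃ r, m₄ r}) ∧
      (fun r : ℝ => m₁ r - ((b^2 * r ^ (2 - 2*θ) : ℝ) : ℂ))
        =O[atTop] (fun r : ℝ => r ^ (3 - 4*θ)) ∧
      (fun r : ℝ => m₂ r - ((a^2 * r ^ (2 - 2*θ) : ℝ) : ℂ))
        =O[atTop] (fun r : ℝ => r ^ (3 - 4*θ)) ∧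
      (fun r : ℝ => m₃ r - ((r ^ (2*θ) + (1 - b^2) * r ^ (2 - 2*θ) : ℝ) : ℂ))
        =O[atTop] (fun r : ℝ => r ^ (3 - 4*θ)) ∧
      (fun r : ℝ => m₄ r - ((r ^ (2*θ) + (1 - a^2) * r ^ (2 - 2*θ) : ℝ) : ℂ))
        =O[atTop] (fun r : ℝ => r ^ (3 - 4*θ)) :=
  stmt8_general a b ρ θ hθ hsum

end
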